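/- For each d ∈ ℕ there exists k = k(d) ∈ ℕ such that the following holds: for every rank-d lattice L in ℝ^d (a subgroup of ℝ^d generated by an ℝ-basis of ℝ^d) and every finite subgroup P of the orthogonal group O(d), the collection of subgroups Γ of the group of affine isometries of ℝ^d whose lattice of translations L_Γ equals L and whose point group P_Γ equals P has at most k equivalence classes under the equivalence in which Γ and Γ' are equivalent iff Γ' = t Γ t^{−1} for some translation t : x ↦ x + a with a ∈ ℝ^d. -/

import Mathlib

/-!
Each `φ ∈ Γ` is `x ↦ A x + c` with `A ∈ P`, and for fixed `A` the admissible `c` form one coset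
of `L`; so `Γ` is determined by `L`, `P` and a choice of translation part `t A` for each `A ∈ P`.
Conjugating by `x ↦ x + a` replaces `t A` by `t A + a - A a`. Since `t` is a cocycle modulo `L`,
averaging it over `P` gives an `a` after which `|P| • t A ∈ L` for all `A`; the translation parts
may then be taken from a fixed set of representatives of `|P|⁻¹ L / L`, which has `|P| ^ d`
elements. Finally `P` acts faithfully on `L ≅ ℤ ^ d`, and by Minkowski's lemma (an integer matrix
of finite order that is `≡ 1 mod 3` is `1`) reduction mod `3` embeds `P` into the `d × d`
matrices over `ZMod 3`, so `|P| ≤ 3 ^ d ^ 2`.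
-/

/-- The group of (surjective) isometries of `ℝ^d`, as a subgroup of the permutations of `ℝ^d`.
(Every surjective isometry of a Euclidean space is automatically affine, so this is the group
of affine isometries of `ℝ^d`.) -/
def isomPermGroup (d : ℕ) : Subgroup (Equiv.Perm (EuclideanSpace ℝ (Fin d))) where
  carrier := {π | ∀ x y, dist (π x) (π y) = dist x y}
  one_mem' := by intro x y; simp
  mul_mem' := by
    intro π σ hπ hσ x y
    simpa [Equiv.Perm.mul_apply] using (hπ (σ x) (σ y)).trans (hσ x y)
  inv_mem' := by
    intro π hπ x y
    simpa using (hπ (π⁻¹ x) (π⁻¹ y)).symm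

open Finset Submodule Set Equiv

section Minkowski

variable {R : Type*} [Ring R]

theorem exists_pow_eq_one_add_three_zsmul {C M : R} (hC : C = 1 + (3 : ℤ) • M) (i : ℕ) :
    ∃ Y, C ^ i = 1 + (3 : ℤ) • Y := by
  induction i with
  | zero => exact ⟨0, by simp⟩
  | succ i ih =>
    obtain ⟨Y, hY⟩ := ih
    exact ⟨Y + M + (3 : ℤ) • (Y * M), by rw [pow_succ, hY, hC]; noncomm_ring⟩

variable [IsAddTorsionFree R]

theorem exists_eq_three_zsmul_of_pow_prime_eq_one {p k : ℕ} (hp : p.Prime) (hk : k ≠ 0) {M : R}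
    (h : (1 + (3 : ℤ) ^ k • M) ^ p = 1) : ∃ M', M = (3 : ℤ) • M' := by
  -- Cancelling `3 ^ k` in `(∑ i < p, Cⁱ) * (C - 1) = Cᵖ - 1 = 0`. For `p ≠ 3` it suffices that
  -- `∑ i < p, Cⁱ ≡ p mod 3`; for `p = 3` the sum is expanded to second order in `C - 1`.
  have hSM : (∑ i ∈ range p, (1 + (3 : ℤ) ^ k • M) ^ i) * M = 0 := by
    have h1 := geom_sum_mul (1 + (3 : ℤ) ^ k • M) p
    rw [h, sub_self, add_sub_cancel_left, mul_smul_comm] at h1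
    exact zsmul_right_injective (pow_ne_zero k three_ne_zero) (h1.trans (smul_zero _).symm)
  obtain ⟨j, rfl⟩ : ∃ j, k = j + 1 := ⟨k - 1, by omega⟩
  by_cases hp3 : p = 3
  · subst hp3
    have hexp : ∀ E : R, (∑ i ∈ range 3, (1 + E) ^ i) * M
        = (3 : ℤ) • M + ((3 : ℤ) • (E * M) + E * (E * M)) := by
      intro E
      simp only [sum_range_succ, sum_range_zero]
      noncomm_ring
    rw [hexp, smul_mul_assoc, mul_smul_comm, smul_mul_assoc, smul_smul, smul_smul] at hSM
    refine ⟨-((3 : ℤ) ^ j • (M * M) + (3 : ℤ) ^ (2 * j) • (M * (M * M))),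
      zsmul_right_injective (three_ne_zero (α := ℤ)) ?_⟩
    change (3 : ℤ) • M = (3 : ℤ) • (3 : ℤ) • _
    rw [eq_neg_of_add_eq_zero_left hSM]
    simp only [smul_neg, smul_add, smul_smul]
    ring_nf
  · have hC3 : 1 + (3 : ℤ) ^ (j + 1) • M = 1 + (3 : ℤ) • ((3 : ℤ) ^ j • M) := by
      rw [smul_smul, ← pow_succ']
    choose Y hY using exists_pow_eq_one_add_three_zsmul hC3
    obtain ⟨u, v, huv⟩ : IsCoprime (p : ℤ) 3 := by
      exact_mod_cast ((Nat.coprime_primes hp Nat.prime_three).2 hp3).isCoprime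
    have hpM : (p : ℤ) • M = (3 : ℤ) • -(∑ i ∈ range p, Y i * M) := by
      rw [← sub_eq_zero, ← hSM]
      simp only [hY, sum_mul, add_mul, one_mul, sum_add_distrib, sum_const, card_range,
        smul_mul_assoc, ← smul_sum, smul_neg, sub_neg_eq_add, natCast_zsmul]
    refine ⟨u • -(∑ i ∈ range p, Y i * M) + v • M, ?_⟩
    calc M = (u * p + v * 3) • M := by rw [huv, one_smul]
      _ = _ := by
        rw [add_smul, mul_smul, hpM, mul_smul, smul_add, smul_comm (3 : ℤ) u, smul_comm (3 : ℤ) v]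

theorem exists_three_zsmul_eq_three_pow_zsmul_of_pow_prime_eq_one {p : ℕ} (hp : p.Prime) {M : R}
    (h : (1 + (3 : ℤ) • M) ^ p = 1) (k : ℕ) : ∃ Y, (3 : ℤ) • M = (3 : ℤ) ^ (k + 1) • Y := by
  induction k with
  | zero => exact ⟨M, by rw [zero_add, pow_one]⟩
  | succ k ih =>
    obtain ⟨Y, hY⟩ := ih
    obtain ⟨Y', rfl⟩ := exists_eq_three_zsmul_of_pow_prime_eq_one hp k.succ_ne_zero (hY ▸ h)
    exact ⟨Y', by rw [hY, smul_smul, ← pow_succ]⟩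

end Minkowski

namespace Matrix

variable {m n : Type*}

instance {α : Type*} [AddMonoid α] [IsAddTorsionFree α] : IsAddTorsionFree (Matrix m n α) :=
  inferInstanceAs (IsAddTorsionFree (m → n → α))

theorem eq_zero_of_forall_exists_eq_pow_zsmul {q : ℕ} (hq : q ≠ 1) {X : Matrix m n ℤ}
    (h : ∀ k : ℕ, ∃ Y, X = (q : ℤ) ^ k • Y) : X = 0 := by
  ext i j
  by_contra hX
  obtain ⟨k, hk⟩ := Int.finiteMultiplicity_iff (a := q).2 ⟨by simpa using hq, hX⟩
  obtain ⟨Y, rfl⟩ := h (k + 1)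
  exact hk ⟨Y i j, by simp⟩

theorem exists_eq_add_zsmul_of_map_eq {q : ℕ} {A B : Matrix m n ℤ}
    (h : A.map (Int.cast : ℤ → ZMod q) = B.map Int.cast) : ∃ D, B = A + (q : ℤ) • D := by
  refine ⟨of fun i j => (B i j - A i j) / q, ?_⟩
  ext i j
  have hdvd : (q : ℤ) ∣ B i j - A i j :=
    (ZMod.intCast_eq_intCast_iff_dvd_sub _ _ _).1 (congr_fun₂ h i j)
  simp [Int.mul_ediv_cancel' hdvd]

variable [Fintype n] [DecidableEq n]

theorem eq_one_of_pow_prime_eq_one_of_eq_one_add_three_zsmul {p : ℕ} (hp : p.Prime)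
    {C : Matrix n n ℤ} (hC : C ^ p = 1) (h3 : ∃ M, C = 1 + (3 : ℤ) • M) : C = 1 := by
  obtain ⟨M, rfl⟩ := h3
  have h3M : (3 : ℤ) • M = 0 := eq_zero_of_forall_exists_eq_pow_zsmul (q := 3) (by norm_num)
    fun k => by
      obtain ⟨Y, hY⟩ := exists_three_zsmul_eq_three_pow_zsmul_of_pow_prime_eq_one hp hC k
      exact ⟨(3 : ℤ) • Y, by rw [Nat.cast_ofNat, hY, pow_succ, mul_smul]⟩
  rw [h3M, add_zero]

theorem eq_one_of_pow_eq_one_of_eq_one_add_three_zsmul {k : ℕ} (hk : k ≠ 0) {C : Matrix n n ℤ}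
    (hC : C ^ k = 1) (h3 : ∃ M, C = 1 + (3 : ℤ) • M) : C = 1 := by
  induction k using Nat.recOnMul generalizing C with
  | zero => exact absurd rfl hk
  | one => rwa [pow_one] at hC
  | prime p hp => exact eq_one_of_pow_prime_eq_one_of_eq_one_add_three_zsmul hp hC h3
  | mul a b iha ihb =>
    obtain ⟨M, hM⟩ := h3
    have hCa : C ^ a = 1 :=
      ihb (right_ne_zero_of_mul hk) (by rw [← pow_mul, hC]) (exists_pow_eq_one_add_three_zsmul hM a)
    exact iha (left_ne_zero_of_mul hk) hCa ⟨M, hM⟩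

theorem card_le_three_pow_of_injective {G : Type*} [Group G] [Finite G] (ρ : G →* Matrix n n ℤ)
    (hρ : Function.Injective ρ) : Nat.card G ≤ 3 ^ (Fintype.card n ^ 2) := by
  have hred : Function.Injective fun g => (ρ g).map (Int.cast : ℤ → ZMod 3) := by
    intro g h hgh
    obtain ⟨D, hD⟩ := exists_eq_add_zsmul_of_map_eq hgh
    have h3 : ρ (g⁻¹ * h) = 1 + (3 : ℤ) • (ρ g⁻¹ * D) := by
      rw [map_mul, hD, mul_add, ← map_mul, inv_mul_cancel, map_one, mul_smul_comm, Nat.cast_ofNat]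
    have hpow : ρ (g⁻¹ * h) ^ orderOf (g⁻¹ * h) = 1 := by
      rw [← map_pow, pow_orderOf_eq_one, map_one]
    have h1 := eq_one_of_pow_eq_one_of_eq_one_add_three_zsmul (orderOf_pos _).ne' hpow ⟨_, h3⟩
    exact inv_mul_eq_one.1 (hρ (h1.trans (map_one ρ).symm))
  calc Nat.card G ≤ Nat.card (Matrix n n (ZMod 3)) := Nat.card_le_card_of_injective _ hred
    _ = 3 ^ (Fintype.card n ^ 2) := by simp [Matrix, Nat.card_eq_fintype_card, sq, pow_mul]

end Matrix

namespace Module.Basis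

variable {ι V : Type*} [Fintype ι] [AddCommGroup V] [Module ℝ V]

theorem exists_finset_sub_mem_span_int (b : Basis ι ℝ V) {n : ℕ} (hn : n ≠ 0) :
    ∃ F : Finset V, F.card ≤ n ^ Fintype.card ι ∧
      ∀ w, n • w ∈ span ℤ (range b) → ∃ u ∈ F, w - u ∈ span ℤ (range b) := by
  classical
  refine ⟨Finset.univ.image fun c : ι → Fin n => ∑ i, ((c i : ℕ) / n : ℝ) • b i,
    card_image_le.trans (by simp), fun w hw => ?_⟩
  -- `n • w = ∑ m i • b i`; reduce each `m i` modulo `n`.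
  choose m hm using (b.mem_span_iff_repr_mem ℤ _).1 hw
  have hn' : (0 : ℤ) < n := by omega
  have hmod : ∀ i, ((m i % n).toNat : ℝ) = ((m i % n : ℤ) : ℝ) := fun i => by
    exact_mod_cast Int.toNat_of_nonneg (Int.emod_nonneg _ hn'.ne')
  refine ⟨_, mem_image_of_mem _ (mem_univ fun i => ⟨(m i % n).toNat, by
    have := Int.emod_lt_of_pos (m i) hn'; omega⟩),
    (b.mem_span_iff_repr_mem ℤ _).2 fun i => ⟨m i / n, ?_⟩⟩
  have hmi := hm i
  simp only [map_nsmul, Finsupp.smul_apply, nsmul_eq_mul, algebraMap_int_eq, eq_intCast] at hmi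
  rw [map_sub, Finsupp.sub_apply, b.repr_sum_self]
  simp only [hmod, algebraMap_int_eq, eq_intCast]
  have hdiv : (m i : ℝ) = n * ((m i / n : ℤ) : ℝ) + ((m i % n : ℤ) : ℝ) := by
    exact_mod_cast (Int.mul_ediv_add_emod (m i) n).symm
  have hnR : (n : ℝ) ≠ 0 := by exact_mod_cast hn
  field_simp
  linarith

theorem card_le_three_pow_of_forall_apply_mem_span (b : Basis ι ℝ V) {P : Subgroup (Perm V)}
    [Finite P] (hlin : ∀ A ∈ P, IsLinearMap ℝ ⇑A)
    (hP : ∀ A ∈ P, ∀ v ∈ span ℤ (range b), A v ∈ span ℤ (range b)) :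
    Nat.card P ≤ 3 ^ (Fintype.card ι ^ 2) := by
  classical
  let ψ : P →* Module.End ℤ (span ℤ (range b)) :=
    { toFun := fun A => (((hlin A A.2).mk' _).restrictScalars ℤ).restrict (hP A A.2)
      map_one' := by ext; rfl
      map_mul' := fun _ _ => by ext; rfl }
  have hψ : Function.Injective ψ := by
    intro A B hAB
    have hb : ∀ i, (A : Perm V) (b i) = (B : Perm V) (b i) := fun i => by
      rw [← b.restrictScalars_apply ℤ i]
      exact congr_arg (fun f => (f (b.restrictScalars ℤ i) : V)) hAB
    have hAB' : (hlin A A.2).mk' _ = (hlin B B.2).mk' _ := b.ext hb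
    exact Subtype.ext (Equiv.ext (LinearMap.congr_fun hAB'))
  let toMatrix := LinearMap.toMatrixAlgEquiv (b.restrictScalars ℤ)
  exact Matrix.card_le_three_pow_of_injective (toMatrix.toRingEquiv.toMonoidHom.comp ψ)
    (toMatrix.injective.comp hψ)

end Module.Basis

theorem isLinearMap_of_dist_eq {E : Type*} [NormedAddCommGroup E] [NormedSpace ℝ E]
    {A : Equiv.Perm E} (hA : ∀ x y, dist (A x) (A y) = dist x y) (h0 : A 0 = 0) :
    IsLinearMap ℝ ⇑A :=
  ((IsometryEquiv.mk A (Isometry.of_dist_eq hA)).toRealLinearIsometryEquivOfMapZero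
    h0).toLinearMap.isLinear

section AffinePerm

variable {V : Type*} [AddCommGroup V]

theorem MulAut.conj_addRight_addRight (a v : V) :
    MulAut.conj (Equiv.addRight a) (Equiv.addRight v) = Equiv.addRight v := by
  ext x
  simp [MulAut.conj_apply]
  abel

theorem map_conj_addRight_map_conj_addRight_neg (Γ : Subgroup (Perm V)) (a : V) :
    (Γ.map (MulAut.conj (Equiv.addRight (-a))).toMonoidHom).map
      (MulAut.conj (Equiv.addRight a)).toMonoidHom = Γ := by
  rw [Subgroup.map_map]
  convert Γ.map_id
  ext φ x
  simp

theorem MulAut.conj_addRight_mul [Module ℝ V] {A : Perm V} (hA : IsLinearMap ℝ ⇑A) (a c : V) :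
    MulAut.conj (Equiv.addRight a) (Equiv.addRight c * A) = Equiv.addRight (c + a - A a) * A := by
  ext x
  simp only [MulAut.conj_apply, Perm.mul_apply, Perm.inv_def, Equiv.addRight_symm,
    Equiv.coe_addRight, hA.map_add, hA.map_neg]
  abel

/-- `L_Γ = L` and `P_Γ = P`. -/
structure HasLatticeAndPointGroup (Γ : Subgroup (Perm V)) (L : AddSubgroup V)
    (P : Subgroup (Perm V)) : Prop where
  addRight_mem_iff : ∀ v, Equiv.addRight v ∈ Γ ↔ v ∈ L
  mem_pointGroup_iff : ∀ A, A ∈ P ↔ ∃ φ ∈ Γ, ∀ x, φ x = A x + φ 0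

namespace HasLatticeAndPointGroup

variable {Γ Γ' : Subgroup (Perm V)} {L : AddSubgroup V} {P : Subgroup (Perm V)}

theorem addRight_mul_mem_iff (hΓ : HasLatticeAndPointGroup Γ L P) {A : Perm V} {c : V}
    (hc : Equiv.addRight c * A ∈ Γ) (c' : V) : Equiv.addRight c' * A ∈ Γ ↔ c' - c ∈ L := by
  rw [show Equiv.addRight c' * A = Equiv.addRight (c' - c) * (Equiv.addRight c * A) by ext; simp,
    Subgroup.mul_mem_cancel_right _ hc, hΓ.addRight_mem_iff]

theorem exists_addRight_mul_mem (hΓ : HasLatticeAndPointGroup Γ L P) {A : Perm V} (hA : A ∈ P) :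
    ∃ c, Equiv.addRight c * A ∈ Γ := by
  obtain ⟨φ, hφ, hφA⟩ := (hΓ.mem_pointGroup_iff A).1 hA
  exact ⟨φ 0, by convert hφ; ext x; exact (hφA x).symm⟩

theorem exists_eq_addRight_mul (hΓ : HasLatticeAndPointGroup Γ L P) {φ : Perm V} (hφ : φ ∈ Γ) :
    ∃ A ∈ P, φ = Equiv.addRight (φ 0) * A :=
  ⟨Equiv.addRight (-φ 0) * φ, (hΓ.mem_pointGroup_iff _).2 ⟨φ, hφ, fun x => by simp⟩, by ext; simp⟩

theorem le_of_forall_exists_mem (hΓ : HasLatticeAndPointGroup Γ L P)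
    (hΓ' : HasLatticeAndPointGroup Γ' L P)
    (h : ∀ A ∈ P, ∃ c, Equiv.addRight c * A ∈ Γ ∧ Equiv.addRight c * A ∈ Γ') : Γ ≤ Γ' := by
  intro φ hφ
  obtain ⟨A, hA, hφA⟩ := hΓ.exists_eq_addRight_mul hφ
  obtain ⟨c, hc, hc'⟩ := h A hA
  rw [hφA] at hφ ⊢
  exact (hΓ'.addRight_mul_mem_iff hc' _).2 ((hΓ.addRight_mul_mem_iff hc _).1 hφ)

theorem eq_of_forall_exists_mem (hΓ : HasLatticeAndPointGroup Γ L P)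
    (hΓ' : HasLatticeAndPointGroup Γ' L P)
    (h : ∀ A ∈ P, ∃ c, Equiv.addRight c * A ∈ Γ ∧ Equiv.addRight c * A ∈ Γ') : Γ = Γ' :=
  (hΓ.le_of_forall_exists_mem hΓ' h).antisymm
    (hΓ'.le_of_forall_exists_mem hΓ fun A hA => (h A hA).imp fun _ => And.symm)

theorem exists_finset_card_le_mem_iff (F : Finset V) [Finite P] :
    ∃ R : Finset (Subgroup (Perm V)), R.card ≤ F.card ^ Nat.card P ∧
      ∀ Γ, Γ ∈ R ↔ HasLatticeAndPointGroup Γ L P ∧ ∀ A ∈ P, ∃ c ∈ F, Equiv.addRight c * A ∈ Γ := by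
  set S := {Γ | HasLatticeAndPointGroup Γ L P ∧ ∀ A ∈ P, ∃ c ∈ F, Equiv.addRight c * A ∈ Γ}
  choose f hfF hf using fun (Γ : S) (A : P) => Γ.2.2 A A.2
  let f' : S → P → F := fun Γ A => ⟨f Γ A, hfF Γ A⟩
  have hinj : Function.Injective f' := fun Γ₁ Γ₂ h => Subtype.ext <|
    Γ₁.2.1.eq_of_forall_exists_mem Γ₂.2.1 fun A hA => ⟨f Γ₁ ⟨A, hA⟩, hf _ _, by
      rw [show f Γ₁ ⟨A, hA⟩ = f Γ₂ ⟨A, hA⟩ from congr_arg (fun g => (g ⟨A, hA⟩ : V)) h]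
      exact hf _ _⟩
  have : Finite S := Finite.of_injective f' hinj
  refine ⟨S.toFinite.toFinset, ?_, fun Γ => S.toFinite.mem_toFinset⟩
  rw [← Set.ncard_eq_toFinset_card S, ← Nat.card_coe_set_eq]
  calc Nat.card S ≤ Nat.card (P → F) := Nat.card_le_card_of_injective f' hinj
    _ = F.card ^ Nat.card P := by simp [Nat.card_fun]

variable [Module ℝ V]

theorem apply_mem (hΓ : HasLatticeAndPointGroup Γ L P) (hlin : ∀ A ∈ P, IsLinearMap ℝ ⇑A)
    {A : Perm V} (hA : A ∈ P) {v : V} (hv : v ∈ L) : A v ∈ L := by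
  obtain ⟨c, hc⟩ := hΓ.exists_addRight_mul_mem hA
  have hconj : Equiv.addRight (A v)
      = Equiv.addRight c * A * Equiv.addRight v * (Equiv.addRight c * A)⁻¹ := by
    rw [eq_mul_inv_iff_mul_eq]
    ext x
    simp [(hlin A hA).map_add]
    abel
  rw [← hΓ.addRight_mem_iff, hconj]
  exact mul_mem (mul_mem hc ((hΓ.addRight_mem_iff v).2 hv)) (inv_mem hc)

theorem map_conj (hΓ : HasLatticeAndPointGroup Γ L P) (hlin : ∀ A ∈ P, IsLinearMap ℝ ⇑A) (a : V) :
    HasLatticeAndPointGroup (Γ.map (MulAut.conj (Equiv.addRight a)).toMonoidHom) L P where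
  addRight_mem_iff v := by
    rw [← MulAut.conj_addRight_addRight a v, Subgroup.mem_map_equiv, MulEquiv.symm_apply_apply,
      hΓ.addRight_mem_iff]
  mem_pointGroup_iff A := by
    refine ⟨fun hA => ?_, fun ⟨φ, hφ, hφA⟩ => ?_⟩
    · obtain ⟨c, hc⟩ := hΓ.exists_addRight_mul_mem hA
      refine ⟨_, Subgroup.mem_map_of_mem _ hc, fun x => ?_⟩
      simp [MulAut.conj_addRight_mul (hlin A hA), (hlin A hA).map_zero]
    · obtain ⟨ψ, hψ, rfl⟩ := Subgroup.mem_map.1 hφ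
      obtain ⟨B, hB, hψB⟩ := hΓ.exists_eq_addRight_mul hψ
      rw [hψB] at hφA
      convert hB
      ext x
      simpa [MulAut.conj_addRight_mul (hlin B hB), (hlin B hB).map_zero] using (hφA x).symm

theorem exists_eq_map_conj [Finite P] (hΓ : HasLatticeAndPointGroup Γ L P)
    (hlin : ∀ A ∈ P, IsLinearMap ℝ ⇑A) :
    ∃ (a : V) (Γ' : Subgroup (Perm V)), Γ = Γ'.map (MulAut.conj (Equiv.addRight a)).toMonoidHom ∧
      HasLatticeAndPointGroup Γ' L P ∧
      ∀ A ∈ P, ∃ c, Nat.card P • c ∈ L ∧ Equiv.addRight c * A ∈ Γ' := by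
  have := Fintype.ofFinite P
  choose t ht using fun A : P => hΓ.exists_addRight_mul_mem A.2
  have hcocycle : ∀ A B : P, (A : Perm V) (t B) + t A - t (A * B) ∈ L := fun A B =>
    (hΓ.addRight_mul_mem_iff (ht (A * B)) _).1 <| by
      convert mul_mem (ht A) (ht B) using 1
      ext x
      simp [(hlin A A.2).map_add]
      abel
  set n := Nat.card P
  set a : V := (n : ℝ)⁻¹ • ∑ B, t B
  have hna : n • a = ∑ B, t B := by
    rw [← Nat.cast_smul_eq_nsmul ℝ, smul_inv_smul₀ (Nat.cast_ne_zero.2 Nat.card_pos.ne')]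
  refine ⟨a, Γ.map (MulAut.conj (Equiv.addRight (-a))).toMonoidHom,
    (map_conj_addRight_map_conj_addRight_neg Γ a).symm, hΓ.map_conj hlin (-a),
    fun A hA => ⟨t ⟨A, hA⟩ + -a - A (-a), ?_, ?_⟩⟩
  · -- Summing the cocycle relation at `(A, B)` over `B` gives `n • (t A - a + A a)`.
    have hsum : ∑ B, t (⟨A, hA⟩ * B) = ∑ B, t B :=
      Fintype.sum_equiv (Equiv.mulLeft _) _ _ fun _ => rfl
    let f := (hlin A hA).mk' A
    have hnc : n • (t ⟨A, hA⟩ + -a - A (-a)) = ∑ B, (A (t B) + t ⟨A, hA⟩ - t (⟨A, hA⟩ * B)) := by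
      change n • (t ⟨A, hA⟩ + -a - f (-a)) = ∑ B, (f (t B) + t ⟨A, hA⟩ - t (⟨A, hA⟩ * B))
      rw [sum_sub_distrib, sum_add_distrib, ← map_sum, sum_const, card_univ,
        ← Nat.card_eq_fintype_card, hsum, ← hna]
      simp only [smul_sub, smul_add, map_neg, smul_neg, map_nsmul]
      abel
    exact hnc ▸ sum_mem fun B _ => hcocycle ⟨A, hA⟩ B
  · rw [← MulAut.conj_addRight_mul (hlin A hA)]
    exact Subgroup.mem_map_of_mem _ (ht ⟨A, hA⟩)

end HasLatticeAndPointGroup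

end AffinePerm

/-- **Theorem (Bieberbach-type finiteness, following the proof of Bieberbach's third theorem).**
For each `d ∈ ℕ` there is `k = k(d) ∈ ℕ` such that for every rank-`d` lattice `L` in `ℝ^d`
(the subgroup generated by an `ℝ`-basis of `ℝ^d`) and every finite subgroup `P` of `O(d)`
(realised as isometries fixing `0`), the subgroups `Γ` of the group of affine isometries of
`ℝ^d` with lattice of translations `L_Γ = L` and point group `P_Γ = P` fall into at most `k`
classes under conjugation by translations `x ↦ x + a`, `a ∈ ℝ^d`. -/
theorem bieberbach_finiteness (d : ℕ) :
    ∃ k : ℕ,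
      ∀ (b : Module.Basis (Fin d) ℝ (EuclideanSpace ℝ (Fin d)))
        (L : AddSubgroup (EuclideanSpace ℝ (Fin d))),
        L = AddSubgroup.closure (Set.range b) →
        ∀ P : Subgroup (Equiv.Perm (EuclideanSpace ℝ (Fin d))),
          P ≤ isomPermGroup d → (∀ A ∈ P, A 0 = 0) → Finite P →
          ∃ R : Finset (Subgroup (Equiv.Perm (EuclideanSpace ℝ (Fin d)))),
            R.card ≤ k ∧
            ∀ Γ : Subgroup (Equiv.Perm (EuclideanSpace ℝ (Fin d))),
              Γ ≤ isomPermGroup d →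
              (∀ v : EuclideanSpace ℝ (Fin d), Equiv.addRight v ∈ Γ ↔ v ∈ L) →
              (∀ A : Equiv.Perm (EuclideanSpace ℝ (Fin d)),
                A ∈ P ↔ ∃ φ ∈ Γ, ∀ x, φ x = A x + φ 0) →
              ∃ Γ' ∈ R, ∃ a : EuclideanSpace ℝ (Fin d),
                Γ = Subgroup.map (MulAut.conj (Equiv.addRight a)).toMonoidHom Γ' := by
  refine ⟨((3 ^ d ^ 2) ^ d) ^ 3 ^ d ^ 2, fun b L hL P hPiso hP0 _ => ?_⟩
  rw [← span_int_eq_addSubgroupClosure] at hL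
  subst hL
  have hlin : ∀ A ∈ P, IsLinearMap ℝ ⇑A := fun A hA => isLinearMap_of_dist_eq (hPiso hA) (hP0 A hA)
  obtain ⟨F, hFcard, hF⟩ := b.exists_finset_sub_mem_span_int (Nat.card_pos (α := P)).ne'
  obtain ⟨R, hRcard, hR⟩ := HasLatticeAndPointGroup.exists_finset_card_le_mem_iff
    (L := (span ℤ (range b)).toAddSubgroup) (P := P) F
  refine ⟨R, ?_, fun Γ _ hΓL hΓP => ?_⟩
  · rcases R.eq_empty_or_nonempty with rfl | ⟨Γ₀, hΓ₀⟩
    · simp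
    have hP : Nat.card P ≤ 3 ^ d ^ 2 := by
      simpa using b.card_le_three_pow_of_forall_apply_mem_span hlin fun A hA v hv =>
        ((hR Γ₀).1 hΓ₀).1.apply_mem hlin hA hv
    calc R.card ≤ F.card ^ Nat.card P := hRcard
      _ ≤ (Nat.card P ^ d) ^ Nat.card P := by simpa using Nat.pow_le_pow_left hFcard _
      _ ≤ ((3 ^ d ^ 2) ^ d) ^ Nat.card P := Nat.pow_le_pow_left (Nat.pow_le_pow_left hP d) _
      _ ≤ _ := Nat.pow_le_pow_right (by positivity) hP
  · obtain ⟨a, Γ', rfl, hΓ', hc⟩ := HasLatticeAndPointGroup.exists_eq_map_conj ⟨hΓL, hΓP⟩ hlin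
    refine ⟨Γ', (hR Γ').2 ⟨hΓ', fun A hA => ?_⟩, a, rfl⟩
    obtain ⟨c, hnc, hcΓ⟩ := hc A hA
    obtain ⟨u, hu, hcu⟩ := hF c hnc
    exact ⟨u, hu, (hΓ'.addRight_mul_mem_iff hcΓ u).2 (by simpa using neg_mem hcu)⟩
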